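/- arXiv:2312.11284 — 5 statements merged into one kernel-verified Lean document; each statement's English description precedes it below -/
import Mathlib

section
/- For each fixed θ ∈ ℝ, (η^{(r)}(rθ) − λ^{(r)}·r·θ − (1/2)·(λ^{(r)})³·(σ^{(r)})²·r²·θ²) / r² → 0 as r ↓ 0. -/
/-!
Write `L_r(s) = E exp(-s X_r)` with `X_r = min(T^{(r)}, 1/r) ∈ [0, 1/r]`, so that `η^{(r)}(rθ)` is
the solution of `L_r(η) = e^{-rθ}`. For `s = O(r)` we have `|s| X_r ≤ |s|/r = O(1)`, so the
third-order Taylor bound for `exp` gives `L_r(s) = 1 - s E T + s² E T² / 2 + O(r³)`; the truncation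
costs only `O(r³)` as well, because `E (T^{(r)})³` is bounded. For
`s_± = λ r θ + λ³ σ² r² θ² / 2 ± ε r²` this yields `L_r(s_±) - e^{-rθ} = ∓ ε m r² + o(r²)`, and as
`L_r` is decreasing, `s_- < η^{(r)}(rθ) < s_+` for all small `r`.
-/

open MeasureTheory Filter Topology Set

lemma abs_exp_sub_quadratic_le (x : ℝ) :
    |Real.exp x - (1 + x + x ^ 2 / 2)| ≤ |x| ^ 3 * Real.exp |x| := by
  have h := Complex.norm_exp_sub_sum_le_norm_mul_exp x 3
  norm_num [Finset.sum_range_succ, ← Complex.ofReal_exp] at h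
  exact_mod_cast h

lemma pow_le_one_add_pow {x : ℝ} (hx : 0 ≤ x) {k n : ℕ} (hkn : k ≤ n) : x ^ k ≤ 1 + x ^ n := by
  rcases le_total x 1 with h | h
  · linarith [pow_le_one₀ hx h (n := k), pow_nonneg hx n]
  · linarith [pow_le_pow_right₀ h hkn]

lemma abs_sub_min_one_div_le {x r : ℝ} (hx : 0 ≤ x) (hr : 0 < r) :
    |x - min x (1 / r)| ≤ r ^ 2 * x ^ 3 := by
  rcases le_total x (1 / r) with h | h
  · rw [min_eq_left h, sub_self, abs_zero]; positivity
  · have hrx : 1 ≤ r * x := by rwa [div_le_iff₀ hr, mul_comm] at h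
    rw [min_eq_right h, abs_of_nonneg (by linarith)]
    have : 0 < 1 / r := by positivity
    nlinarith [mul_le_mul hrx hrx zero_le_one (by positivity)]

lemma abs_sq_sub_min_one_div_sq_le {x r : ℝ} (hx : 0 ≤ x) (hr : 0 < r) :
    |x ^ 2 - min x (1 / r) ^ 2| ≤ r * x ^ 3 := by
  rcases le_total x (1 / r) with h | h
  · rw [min_eq_left h, sub_self, abs_zero]; positivity
  · have hrx : 1 ≤ r * x := by rwa [div_le_iff₀ hr, mul_comm] at h
    have : 0 < 1 / r := by positivity
    rw [min_eq_right h, abs_of_nonneg (by nlinarith)]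
    nlinarith [mul_le_mul_of_nonneg_left hrx (sq_nonneg x)]

section

variable {Ω : Type*} [MeasurableSpace Ω] {μ : Measure Ω}

lemma integrable_pow_of_le [IsFiniteMeasure μ] {f : Ω → ℝ} (hf : Measurable f)
    (h0 : 0 ≤ᵐ[μ] f) {n : ℕ} (hn : Integrable (fun ω => f ω ^ n) μ) {k : ℕ} (hkn : k ≤ n) :
    Integrable (fun ω => f ω ^ k) μ := by
  refine ((integrable_const 1).add hn).mono' (hf.pow_const k).aestronglyMeasurable ?_
  filter_upwards [h0] with ω hω
  rw [Real.norm_eq_abs, abs_of_nonneg (pow_nonneg hω k)]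
  exact pow_le_one_add_pow hω hkn

lemma integrable_pow_of_mem_Icc [IsFiniteMeasure μ] {X : Ω → ℝ} (hX : Measurable X) {B : ℝ}
    (hXB : ∀ᵐ ω ∂μ, X ω ∈ Icc 0 B) (k : ℕ) : Integrable (fun ω => X ω ^ k) μ := by
  refine (integrable_const (B ^ k)).mono' (hX.pow_const k).aestronglyMeasurable ?_
  filter_upwards [hXB] with ω hω
  rw [Real.norm_eq_abs, abs_of_nonneg (pow_nonneg hω.1 k)]
  exact pow_le_pow_left₀ hω.1 hω.2 k

lemma integrable_exp_neg_mul [IsFiniteMeasure μ] {X : Ω → ℝ} (hX : Measurable X) {B : ℝ}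
    (hXB : ∀ᵐ ω ∂μ, X ω ∈ Icc 0 B) (s : ℝ) : Integrable (fun ω => Real.exp (-s * X ω)) μ := by
  refine (integrable_const (Real.exp (|s| * B))).mono'
    (hX.const_mul (-s)).exp.aestronglyMeasurable ?_
  filter_upwards [hXB] with ω hω
  rw [Real.norm_eq_abs, Real.abs_exp, Real.exp_le_exp]
  calc -s * X ω ≤ |s| * X ω := mul_le_mul_of_nonneg_right (neg_le_abs s) hω.1
    _ ≤ |s| * B := mul_le_mul_of_nonneg_left hω.2 (abs_nonneg s)

lemma antitone_integral_exp_neg_mul [IsFiniteMeasure μ] {X : Ω → ℝ} (hX : Measurable X) {B : ℝ}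
    (hXB : ∀ᵐ ω ∂μ, X ω ∈ Icc 0 B) : Antitone fun s => ∫ ω, Real.exp (-s * X ω) ∂μ := by
  intro s s' hss'
  refine integral_mono_of_nonneg (ae_of_all _ fun ω => (Real.exp_pos _).le)
    (integrable_exp_neg_mul hX hXB s) ?_
  filter_upwards [hXB] with ω hω
  exact Real.exp_le_exp.2 (by nlinarith [hω.1])

lemma abs_integral_exp_neg_mul_sub_le [IsProbabilityMeasure μ] {X : Ω → ℝ} (hX : Measurable X)
    {B : ℝ} (hXB : ∀ᵐ ω ∂μ, X ω ∈ Icc 0 B) (s : ℝ) :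
    |∫ ω, Real.exp (-s * X ω) ∂μ - (1 - s * ∫ ω, X ω ∂μ + s ^ 2 / 2 * ∫ ω, X ω ^ 2 ∂μ)|
      ≤ |s| ^ 3 * Real.exp (|s| * B) * ∫ ω, X ω ^ 3 ∂μ := by
  have hX1 : Integrable X μ := by simpa using integrable_pow_of_mem_Icc hX hXB 1
  have hlin : Integrable (fun ω => 1 - s * X ω) μ := (integrable_const 1).sub (hX1.const_mul s)
  have hquad : Integrable (fun ω => s ^ 2 / 2 * X ω ^ 2) μ :=
    (integrable_pow_of_mem_Icc hX hXB 2).const_mul _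
  have hpoly : Integrable (fun ω => 1 - s * X ω + s ^ 2 / 2 * X ω ^ 2) μ := hlin.add hquad
  have hpoly_eq : ∫ ω, (1 - s * X ω + s ^ 2 / 2 * X ω ^ 2) ∂μ
      = 1 - s * ∫ ω, X ω ∂μ + s ^ 2 / 2 * ∫ ω, X ω ^ 2 ∂μ := by
    rw [integral_add hlin hquad, integral_sub (integrable_const 1) (hX1.const_mul s),
      integral_const_mul, integral_const_mul]
    simp
  rw [← hpoly_eq, ← integral_sub (integrable_exp_neg_mul hX hXB s) hpoly, ← integral_const_mul]
  refine abs_integral_le_integral_abs.trans (integral_mono_ae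
    ((integrable_exp_neg_mul hX hXB s).sub hpoly).abs
    ((integrable_pow_of_mem_Icc hX hXB 3).const_mul _) ?_)
  filter_upwards [hXB] with ω hω
  have habs : |-s * X ω| = |s| * X ω := by rw [abs_mul, abs_neg, abs_of_nonneg hω.1]
  calc |Real.exp (-s * X ω) - (1 - s * X ω + s ^ 2 / 2 * X ω ^ 2)|
      = |Real.exp (-s * X ω) - (1 + -s * X ω + (-s * X ω) ^ 2 / 2)| := by ring_nf
    _ ≤ |-s * X ω| ^ 3 * Real.exp |-s * X ω| := abs_exp_sub_quadratic_le _
    _ ≤ (|s| * X ω) ^ 3 * Real.exp (|s| * B) := by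
      rw [habs]
      exact mul_le_mul_of_nonneg_left (Real.exp_le_exp.2 (by gcongr; exact hω.2))
        (pow_nonneg (mul_nonneg (abs_nonneg s) hω.1) 3)
    _ = |s| ^ 3 * Real.exp (|s| * B) * X ω ^ 3 := by ring

lemma abs_integral_sub_integral_le {g h k : Ω → ℝ} (hg : Integrable g μ) (hh : Integrable h μ)
    (hk : Integrable k μ) (hle : ∀ᵐ ω ∂μ, |g ω - h ω| ≤ k ω) :
    |∫ ω, g ω ∂μ - ∫ ω, h ω ∂μ| ≤ ∫ ω, k ω ∂μ := by
  rw [← integral_sub hg hh]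
  exact abs_integral_le_integral_abs.trans (integral_mono_ae (hg.sub hh).abs hk hle)

lemma abs_integral_exp_neg_mul_min_sub_le [IsProbabilityMeasure μ] {f : Ω → ℝ}
    (hf : Measurable f) (h0 : 0 ≤ᵐ[μ] f) (h3 : Integrable (fun ω => f ω ^ 3) μ)
    {r : ℝ} (hr : 0 < r) (t : ℝ) :
    |∫ ω, Real.exp (-(r * t) * min (f ω) (1 / r)) ∂μ
        - (1 - r * t * ∫ ω, f ω ∂μ + (r * t) ^ 2 / 2 * ∫ ω, f ω ^ 2 ∂μ)|
      ≤ r ^ 3 * ((|t| ^ 3 * Real.exp |t| + |t| + t ^ 2 / 2) * ∫ ω, f ω ^ 3 ∂μ) := by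
  set X := fun ω => min (f ω) (1 / r)
  have hX : Measurable X := hf.min measurable_const
  have hXB : ∀ᵐ ω ∂μ, X ω ∈ Icc 0 (1 / r) := by
    filter_upwards [h0] with ω hω using ⟨le_min hω (by positivity), min_le_right _ _⟩
  have hf1 : Integrable f μ := by simpa using integrable_pow_of_le hf h0 h3 (k := 1) (by norm_num)
  have hf2 := integrable_pow_of_le hf h0 h3 (k := 2) (by norm_num)
  have hmean : |∫ ω, f ω ∂μ - ∫ ω, X ω ∂μ| ≤ r ^ 2 * ∫ ω, f ω ^ 3 ∂μ := by
    rw [← integral_const_mul]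
    refine abs_integral_sub_integral_le hf1 (by simpa using integrable_pow_of_mem_Icc hX hXB 1)
      (h3.const_mul _) ?_
    filter_upwards [h0] with ω hω using abs_sub_min_one_div_le hω hr
  have hsecond : |∫ ω, f ω ^ 2 ∂μ - ∫ ω, X ω ^ 2 ∂μ| ≤ r * ∫ ω, f ω ^ 3 ∂μ := by
    rw [← integral_const_mul]
    refine abs_integral_sub_integral_le hf2 (integrable_pow_of_mem_Icc hX hXB 2)
      (h3.const_mul _) ?_
    filter_upwards [h0] with ω hω using abs_sq_sub_min_one_div_sq_le hω hr
  have hthird : ∫ ω, X ω ^ 3 ∂μ ≤ ∫ ω, f ω ^ 3 ∂μ := by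
    refine integral_mono_ae (integrable_pow_of_mem_Icc hX hXB 3) h3 ?_
    filter_upwards [hXB] with ω hω using pow_le_pow_left₀ hω.1 (min_le_left _ _) 3
  show |∫ ω, Real.exp (-(r * t) * X ω) ∂μ - _| ≤ _
  have hscale : |r * t| * (1 / r) = |t| := by
    rw [abs_mul, abs_of_pos hr]; field_simp
  have htaylor := abs_integral_exp_neg_mul_sub_le hX hXB (r * t)
  rw [hscale] at htaylor
  calc _ = |(∫ ω, Real.exp (-(r * t) * X ω) ∂μ
          - (1 - r * t * ∫ ω, X ω ∂μ + (r * t) ^ 2 / 2 * ∫ ω, X ω ^ 2 ∂μ))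
        + r * t * (∫ ω, f ω ∂μ - ∫ ω, X ω ∂μ)
        + -((r * t) ^ 2 / 2 * (∫ ω, f ω ^ 2 ∂μ - ∫ ω, X ω ^ 2 ∂μ))| := by congr 1; ring
    _ ≤ |r * t| ^ 3 * Real.exp |t| * ∫ ω, X ω ^ 3 ∂μ
        + |r * t| * (r ^ 2 * ∫ ω, f ω ^ 3 ∂μ)
        + (r * t) ^ 2 / 2 * (r * ∫ ω, f ω ^ 3 ∂μ) := by
      refine (abs_add_three _ _ _).trans (add_le_add (add_le_add htaylor ?_) ?_)
      · rw [abs_mul]; gcongr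
      · rw [abs_neg, abs_mul, abs_of_nonneg (by positivity)]; gcongr
    _ ≤ _ := by
      have := mul_le_mul_of_nonneg_left hthird (by positivity : 0 ≤ |r * t| ^ 3 * Real.exp |t|)
      rw [abs_mul, abs_of_pos hr] at this ⊢
      linarith

lemma integral_sq_eq_integral_sub_sq_add_sq [IsProbabilityMeasure μ] {f : Ω → ℝ}
    (hf : MemLp f 2 μ) :
    ∫ ω, f ω ^ 2 ∂μ = ∫ ω, (f ω - ∫ ω', f ω' ∂μ) ^ 2 ∂μ + (∫ ω, f ω ∂μ) ^ 2 := by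
  rw [← ProbabilityTheory.variance_eq_integral hf.aemeasurable,
    ProbabilityTheory.variance_eq_sub hf]
  simp

end

lemma tendsto_quadratic_sub_exp_neg_div_sq (θ : ℝ) :
    Tendsto (fun r => (1 - r * θ + (r * θ) ^ 2 / 2 - Real.exp (-(r * θ))) / r ^ 2) (𝓝 0) (𝓝 0) := by
  refine squeeze_zero_norm (a := fun r => |r| * (|θ| ^ 3 * Real.exp |r * θ|)) (fun r => ?_) ?_
  · rcases eq_or_ne r 0 with rfl | hr
    · simp
    have h := abs_exp_sub_quadratic_le (-(r * θ))
    rw [abs_sub_comm, abs_neg, show 1 + -(r * θ) + (-(r * θ)) ^ 2 / 2 = 1 - r * θ + (r * θ) ^ 2 / 2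
      by ring] at h
    rw [Real.norm_eq_abs, abs_div, abs_of_pos (by positivity : 0 < r ^ 2),
      div_le_iff₀ (by positivity)]
    calc _ ≤ |r * θ| ^ 3 * Real.exp |r * θ| := h
      _ = _ := by rw [abs_mul, mul_pow, ← sq_abs r]; ring
  · simpa using (by fun_prop : Continuous fun r : ℝ => |r| * (|θ| ^ 3 * Real.exp |r * θ|)).tendsto 0

lemma tendsto_integral_exp_neg_mul_min_sub_quadratic_div_sq {Ω : Type*} [MeasurableSpace Ω]
    {P : ℝ → Measure Ω} (hP : ∀ r ∈ Ioc (0:ℝ) 1, IsProbabilityMeasure (P r)) {T : ℝ → Ω → ℝ}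
    (hmeas : ∀ r ∈ Ioc (0:ℝ) 1, Measurable (T r))
    (hTpos : ∀ r ∈ Ioc (0:ℝ) 1, ∀ᵐ ω ∂(P r), 0 < T r ω)
    (hint3 : ∀ r ∈ Ioc (0:ℝ) 1, Integrable (fun ω => T r ω ^ 3) (P r))
    {C : ℝ} (hC : ∀ r ∈ Ioc (0:ℝ) 1, ∫ ω, T r ω ^ 3 ∂(P r) ≤ C)
    {s : ℝ → ℝ} {t₀ : ℝ} (hs : Tendsto (fun r => s r / r) (𝓝[>] 0) (𝓝 t₀)) :
    Tendsto (fun r => (∫ ω, Real.exp (-s r * min (T r ω) (1 / r)) ∂(P r)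
      - (1 - s r * ∫ ω, T r ω ∂(P r) + s r ^ 2 / 2 * ∫ ω, T r ω ^ 2 ∂(P r))) / r ^ 2)
      (𝓝[>] 0) (𝓝 0) := by
  set B : ℝ → ℝ := fun t => |t| ^ 3 * Real.exp |t| + |t| + t ^ 2 / 2
  refine squeeze_zero_norm' (a := fun r => r * (B (s r / r) * C)) ?_ ?_
  · filter_upwards [Ioc_mem_nhdsGT one_pos] with r hr
    have := hP r hr
    have h := abs_integral_exp_neg_mul_min_sub_le (hmeas r hr)
      ((hTpos r hr).mono fun _ h => h.le) (hint3 r hr) hr.1 (s r / r)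
    rw [mul_div_cancel₀ _ hr.1.ne'] at h
    have hB : 0 ≤ B (s r / r) := by positivity
    rw [Real.norm_eq_abs, abs_div, abs_of_pos (pow_pos hr.1 2), div_le_iff₀ (pow_pos hr.1 2)]
    calc _ ≤ r ^ 3 * (B (s r / r) * ∫ ω, T r ω ^ 3 ∂(P r)) := h
      _ ≤ r ^ 3 * (B (s r / r) * C) :=
        mul_le_mul_of_nonneg_left (mul_le_mul_of_nonneg_left (hC r hr) hB) (pow_nonneg hr.1.le 3)
      _ = _ := by ring
  · have hBC : Tendsto (fun r => B (s r / r) * C) (𝓝[>] 0) (𝓝 (B t₀ * C)) :=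
      ((by fun_prop : Continuous fun t => B t * C).tendsto t₀).comp hs
    simpa using (tendsto_id.mono_left nhdsWithin_le_nhds).mul hBC

noncomputable def etaApprox (m v θ r : ℝ) : ℝ :=
  1 / m * r * θ + 1 / 2 * (1 / m) ^ 3 * v * r ^ 2 * θ ^ 2

section

variable {m v : ℝ → ℝ} {m₀ v₀ : ℝ}

lemma tendsto_etaApprox_add_div (hm₀ : m₀ ≠ 0) (hm : Tendsto m (𝓝[>] 0) (𝓝 m₀))
    (hv : Tendsto v (𝓝[>] 0) (𝓝 v₀)) (θ δ : ℝ) :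
    Tendsto (fun r => (etaApprox (m r) (v r) θ r + δ * r ^ 2) / r) (𝓝[>] 0) (𝓝 (θ / m₀)) := by
  have hlim : Tendsto (fun r => (m r, v r, r)) (𝓝[>] 0) (𝓝 (m₀, v₀, 0)) :=
    hm.prodMk_nhds (hv.prodMk_nhds nhdsWithin_le_nhds)
  have hcont : ContinuousAt (fun p : ℝ × ℝ × ℝ =>
      1 / p.1 * θ + 1 / 2 * (1 / p.1) ^ 3 * p.2.1 * p.2.2 * θ ^ 2 + δ * p.2.2) (m₀, v₀, 0) := by
    fun_prop (disch := simp [hm₀])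
  refine (hcont.tendsto.comp hlim).congr' ?_ |>.trans (by simp [div_eq_inv_mul])
  filter_upwards [self_mem_nhdsWithin] with r (hr : 0 < r)
  simp only [Function.comp_def, etaApprox]
  field_simp

lemma tendsto_quadratic_etaApprox_sub_div_sq (hm₀ : m₀ ≠ 0) (hm : Tendsto m (𝓝[>] 0) (𝓝 m₀))
    (hv : Tendsto v (𝓝[>] 0) (𝓝 v₀)) (θ δ : ℝ) :
    Tendsto (fun r => ((1 - (etaApprox (m r) (v r) θ r + δ * r ^ 2) * m r
        + (etaApprox (m r) (v r) θ r + δ * r ^ 2) ^ 2 / 2 * (v r + m r ^ 2))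
        - (1 - r * θ + (r * θ) ^ 2 / 2)) / r ^ 2) (𝓝[>] 0) (𝓝 (-δ * m₀)) := by
  have hlim : Tendsto (fun r => (m r, v r, r)) (𝓝[>] 0) (𝓝 (m₀, v₀, 0)) :=
    hm.prodMk_nhds (hv.prodMk_nhds nhdsWithin_le_nhds)
  -- the point is `r θ / m + r² w`, and its second-order terms cancel exactly
  set w : ℝ × ℝ → ℝ := fun q => θ ^ 2 * q.2 / (2 * q.1 ^ 3) + δ
  have hcont : ContinuousAt (fun p : ℝ × ℝ × ℝ => -δ * p.1
      + p.2.2 * (θ * w (p.1, p.2.1) / p.1 + p.2.2 * w (p.1, p.2.1) ^ 2 / 2) * (p.2.1 + p.1 ^ 2))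
      (m₀, v₀, 0) := by
    fun_prop (disch := simp [hm₀])
  refine (hcont.tendsto.comp hlim).congr' ?_ |>.trans (by simp)
  filter_upwards [self_mem_nhdsWithin, hm.eventually_ne hm₀] with r (hr : 0 < r) hmr
  simp only [Function.comp_def, etaApprox, w]
  field_simp
  ring

end

lemma tendsto_integral_exp_neg_etaApprox_sub_exp_div_sq {Ω : Type*} [MeasurableSpace Ω]
    {P : ℝ → Measure Ω} (hP : ∀ r ∈ Ioc (0:ℝ) 1, IsProbabilityMeasure (P r)) {T : ℝ → Ω → ℝ}
    (hmeas : ∀ r ∈ Ioc (0:ℝ) 1, Measurable (T r))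
    (hTpos : ∀ r ∈ Ioc (0:ℝ) 1, ∀ᵐ ω ∂(P r), 0 < T r ω)
    (hint3 : ∀ r ∈ Ioc (0:ℝ) 1, Integrable (fun ω => T r ω ^ 3) (P r))
    {C : ℝ} (hC : ∀ r ∈ Ioc (0:ℝ) 1, ∫ ω, T r ω ^ 3 ∂(P r) ≤ C) {m σ2 : ℝ → ℝ}
    (hm : ∀ r ∈ Ioc (0:ℝ) 1, m r = ∫ ω, T r ω ∂(P r))
    (hσ2 : ∀ r ∈ Ioc (0:ℝ) 1, σ2 r = ∫ ω, (T r ω - m r) ^ 2 ∂(P r)) {m₀ σ₀ : ℝ} (hm₀ : m₀ ≠ 0)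
    (hmlim : Tendsto m (𝓝[>] 0) (𝓝 m₀)) (hσlim : Tendsto σ2 (𝓝[>] 0) (𝓝 σ₀)) (θ δ : ℝ) :
    Tendsto (fun r => (∫ ω, Real.exp (-(etaApprox (m r) (σ2 r) θ r + δ * r ^ 2)
        * min (T r ω) (1 / r)) ∂(P r) - Real.exp (-(r * θ))) / r ^ 2) (𝓝[>] 0) (𝓝 (-δ * m₀)) := by
  have htrunc := tendsto_integral_exp_neg_mul_min_sub_quadratic_div_sq hP hmeas hTpos hint3 hC
    (tendsto_etaApprox_add_div hm₀ hmlim hσlim θ δ)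
  have hquad := tendsto_quadratic_etaApprox_sub_div_sq hm₀ hmlim hσlim θ δ
  have hexp := tendsto_nhdsWithin_of_tendsto_nhds (s := Ioi 0)
    (tendsto_quadratic_sub_exp_neg_div_sq θ)
  have hmoments : ∀ᶠ r in 𝓝[>] 0,
      ∫ ω, T r ω ∂(P r) = m r ∧ ∫ ω, T r ω ^ 2 ∂(P r) = σ2 r + m r ^ 2 := by
    filter_upwards [Ioc_mem_nhdsGT one_pos] with r hr
    have := hP r hr
    have hT0 := (hTpos r hr).mono fun _ h => h.le
    have hL2 : MemLp (T r) 2 (P r) :=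
      (memLp_two_iff_integrable_sq (hmeas r hr).aestronglyMeasurable).2
        (integrable_pow_of_le (hmeas r hr) hT0 (hint3 r hr) (by norm_num))
    rw [integral_sq_eq_integral_sub_sq_add_sq hL2, ← hm r hr, ← hσ2 r hr]
    exact ⟨rfl, rfl⟩
  refine ((htrunc.add hquad).add hexp).congr' ?_ |>.trans (by simp)
  filter_upwards [hmoments] with r ⟨h1, h2⟩
  rw [h1, h2]
  ring

theorem stmt1_general {Ω : Type*} [MeasurableSpace Ω]
    (P : ℝ → Measure Ω) (hP : ∀ r ∈ Set.Ioc (0:ℝ) 1, IsProbabilityMeasure (P r))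
    (T : ℝ → Ω → ℝ) (hmeas : ∀ r ∈ Set.Ioc (0:ℝ) 1, Measurable (T r))
    (hTpos : ∀ r ∈ Set.Ioc (0:ℝ) 1, ∀ᵐ ω ∂(P r), 0 < T r ω)
    (hint3 : ∀ r ∈ Set.Ioc (0:ℝ) 1, Integrable (fun ω => (T r ω)^3) (P r))
    (hbd3 : ∃ C : ℝ, ∀ r ∈ Set.Ioc (0:ℝ) 1, ∫ ω, (T r ω)^3 ∂(P r) ≤ C)
    (m σ2 : ℝ → ℝ)
    (hm : ∀ r ∈ Set.Ioc (0:ℝ) 1, m r = ∫ ω, T r ω ∂(P r))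
    (hσ2 : ∀ r ∈ Set.Ioc (0:ℝ) 1, σ2 r = ∫ ω, (T r ω - m r)^2 ∂(P r))
    (m0 σ0 : ℝ) (hm0 : 0 < m0)
    (hmlim : Filter.Tendsto m (nhdsWithin 0 (Set.Ioi 0)) (nhds m0))
    (hσlim : Filter.Tendsto σ2 (nhdsWithin 0 (Set.Ioi 0)) (nhds σ0))
    (η : ℝ → ℝ → ℝ)
    (hη : ∀ r ∈ Set.Ioc (0:ℝ) 1, ∀ θ : ℝ,
      Real.exp θ * ∫ ω, Real.exp (-(η r θ) * min (T r ω) (1/r)) ∂(P r) = 1)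
    (θ : ℝ) :
    Filter.Tendsto
      (fun r => (η r (r * θ) - (1 / m r) * r * θ
          - (1/2) * (1 / m r)^3 * σ2 r * r^2 * θ^2) / r^2)
      (nhdsWithin 0 (Set.Ioi 0)) (nhds 0) := by
  obtain ⟨C, hC⟩ := hbd3
  have key := tendsto_integral_exp_neg_etaApprox_sub_exp_div_sq hP hmeas hTpos hint3 hC hm hσ2
    hm0.ne' hmlim hσlim θ
  rw [Metric.tendsto_nhds]
  intro ε hε
  filter_upwards [Ioc_mem_nhdsGT one_pos,
    (key ε).eventually (gt_mem_nhds (by nlinarith : -ε * m0 < 0)),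
    (key (-ε)).eventually (lt_mem_nhds (by nlinarith : 0 < -(-ε) * m0))] with r hr hup hlo
  have := hP r hr
  have hr2 : 0 < r ^ 2 := pow_pos hr.1 2
  have hanti := antitone_integral_exp_neg_mul (μ := P r) ((hmeas r hr).min measurable_const)
    (B := 1 / r) (by
      filter_upwards [hTpos r hr] with ω hω
      exact ⟨le_min hω.le (one_div_nonneg.2 hr.1.le), min_le_right _ _⟩)
  have hηr : ∫ ω, Real.exp (-(η r (r * θ)) * min (T r ω) (1 / r)) ∂(P r)
      = Real.exp (-(r * θ)) := by
    rw [Real.exp_neg]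
    exact (inv_eq_of_mul_eq_one_right (hη r hr (r * θ))).symm
  have hη_lt : η r (r * θ) < etaApprox (m r) (σ2 r) θ r + ε * r ^ 2 :=
    hanti.reflect_lt (by rw [hηr]; linarith [(div_lt_iff₀ hr2).1 hup])
  have hlt_η : etaApprox (m r) (σ2 r) θ r + -ε * r ^ 2 < η r (r * θ) :=
    hanti.reflect_lt (by rw [hηr]; linarith [(lt_div_iff₀ hr2).1 hlo])
  rw [Real.dist_eq, sub_zero, abs_lt, lt_div_iff₀ hr2, div_lt_iff₀ hr2]
  unfold etaApprox at hη_lt hlt_η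
  constructor <;> linarith

theorem stmt1 {Ω : Type*} [MeasurableSpace Ω]
    (P : ℝ → Measure Ω) (hP : ∀ r ∈ Set.Ioc (0:ℝ) 1, IsProbabilityMeasure (P r))
    (T : ℝ → Ω → ℝ) (hmeas : ∀ r ∈ Set.Ioc (0:ℝ) 1, Measurable (T r))
    (hTpos : ∀ r ∈ Set.Ioc (0:ℝ) 1, ∀ᵐ ω ∂(P r), 0 < T r ω)
    (hint3 : ∀ r ∈ Set.Ioc (0:ℝ) 1, Integrable (fun ω => (T r ω)^3) (P r))
    (hbd3 : ∃ C : ℝ, ∀ r ∈ Set.Ioc (0:ℝ) 1, ∫ ω, (T r ω)^3 ∂(P r) ≤ C)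
    (m σ2 : ℝ → ℝ)
    (hm : ∀ r ∈ Set.Ioc (0:ℝ) 1, m r = ∫ ω, T r ω ∂(P r))
    (hmpos : ∀ r ∈ Set.Ioc (0:ℝ) 1, 0 < m r)
    (hσ2 : ∀ r ∈ Set.Ioc (0:ℝ) 1, σ2 r = ∫ ω, (T r ω - m r)^2 ∂(P r))
    (m0 σ0 : ℝ) (hm0 : 0 < m0) (hσ0 : 0 < σ0)
    (hmlim : Filter.Tendsto m (nhdsWithin 0 (Set.Ioi 0)) (nhds m0))
    (hσlim : Filter.Tendsto σ2 (nhdsWithin 0 (Set.Ioi 0)) (nhds σ0))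
    (η : ℝ → ℝ → ℝ)
    (hη : ∀ r ∈ Set.Ioc (0:ℝ) 1, ∀ θ : ℝ,
      Real.exp θ * ∫ ω, Real.exp (-(η r θ) * min (T r ω) (1/r)) ∂(P r) = 1)
    (θ : ℝ) :
    Filter.Tendsto
      (fun r => (η r (r * θ) - (1 / m r) * r * θ
          - (1/2) * (1 / m r)^3 * σ2 r * r^2 * θ^2) / r^2)
      (nhdsWithin 0 (Set.Ioi 0)) (nhds 0) :=
  stmt1_general P hP T hmeas hTpos hint3 hbd3 m σ2 hm hσ2 m0 σ0 hm0 hmlim hσlim η hη θ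
end

section
/- Suppose the boundary balance equations hold: (λ₂+c₁μ)p₂(ℓ₁) = c₂μp₃(ℓ₁+1); (λ₂+c₂μ)p₃(ℓ₁+1) = λ₁p₁(ℓ₁) + λ₂p₂(ℓ₁) + c₂μp₃(ℓ₁+2); and λ₂p₃(ℓ₁+1) = c₂μp₃(ℓ₁+2). Then p₂(ℓ₁) = (λ₁/(c₁μ))·p₁(ℓ₁) and p₃(ℓ₁+1) = ((c₁μ+λ₂)/(c₂μ))·(λ₁/(c₁μ))·p₁(ℓ₁). -/
/-- Boundary relations for the two-level M/M/1 queue: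
`p₂(ℓ₁) = ρ₁₁ p₁(ℓ₁)` and `p₃(ℓ₁+1) = γ₂₂⁻¹ ρ₁₁ p₁(ℓ₁)`. -/
theorem stmt7 (lam1 lam2 c1 c2 mu : ℝ)
    (hlam1 : 0 < lam1) (hlam2 : 0 < lam2) (hc1 : 0 < c1) (hc2 : 0 < c2) (hmu : 0 < mu)
    (ℓ₁ : ℕ) (hℓ₁ : 1 ≤ ℓ₁)
    (p1 p2 p3 : ℕ → ℝ)
    (hp1 : ∀ ℓ ≤ ℓ₁, 0 ≤ p1 ℓ) (hp2 : ∀ ℓ ≤ ℓ₁, 0 ≤ p2 ℓ)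
    (hp3 : ∀ ℓ, ℓ₁ + 1 ≤ ℓ → 0 ≤ p3 ℓ)
    (hbal6 : (lam2 + c1 * mu) * p2 ℓ₁ = c2 * mu * p3 (ℓ₁ + 1))
    (hbal7 : (lam2 + c2 * mu) * p3 (ℓ₁ + 1)
      = lam1 * p1 ℓ₁ + lam2 * p2 ℓ₁ + c2 * mu * p3 (ℓ₁ + 2))
    (hbal8 : lam2 * p3 (ℓ₁ + 1) = c2 * mu * p3 (ℓ₁ + 2)) :
    p2 ℓ₁ = (lam1 / (c1 * mu)) * p1 ℓ₁
    ∧ p3 (ℓ₁ + 1) = ((c1 * mu + lam2) / (c2 * mu)) * (lam1 / (c1 * mu)) * p1 ℓ₁ := by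
  have hc1mu : c1 * mu ≠ 0 := by positivity
  have hc2mu : c2 * mu ≠ 0 := by positivity
  have h1 : p2 ℓ₁ = (lam1 / (c1 * mu)) * p1 ℓ₁ := by
    field_simp
    nlinarith [hbal6, hbal7, hbal8]
  refine ⟨h1, ?_⟩
  field_simp
  nlinarith [hbal6, h1, mul_pos hc1 hmu]
end

section
/- Let (ρ^{(r)})_{r∈(0,1]} be positive reals with (1 − ρ^{(r)})/r → β as r ↓ 0 for some β ∈ ℝ, and let (ℓ^{(r)})_{r∈(0,1]} be positive integers with r·ℓ^{(r)} → L as r ↓ 0 for some L > 0. Then r·Σ_{k=0}^{ℓ^{(r)}−1} (ρ^{(r)})^k converges as r ↓ 0, with limit (1 − exp(−β·L))/β if β ≠ 0, and limit L if β = 0. -/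
/-!
Since `(ρ - 1)/r → -β` and `r ℓ → L`, the exponent `ℓ (ρ - 1)` tends to `-βL`; as `log x ~ x - 1`
near `1`, this gives `ρ^ℓ → e^{-βL}`. For `β ≠ 0` the geometric sum formula writes `r Σ ρ^k` as
`(ρ^ℓ - 1) / ((ρ - 1)/r)`. For `β = 0` every `ρ^k` with `k < ℓ` lies between `1` and `ρ^ℓ → 1`,
so `r Σ ρ^k` differs from `r ℓ → L` by at most `r ℓ |ρ^ℓ - 1| → 0`.
-/

open Filter Real Asymptotics Topology Finset

theorem Real.isEquivalent_log_sub_one : log ~[𝓝 1] fun x => x - 1 := by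
  show (fun x => log x - (x - 1)) =o[𝓝 1] fun x => x - 1
  simpa using (hasDerivAt_log one_ne_zero).isLittleO

theorem abs_pow_sub_one_le_of_le {R : Type*} [Ring R] [LinearOrder R] [IsStrictOrderedRing R]
    {x : R} (hx : 0 ≤ x) {k n : ℕ} (hkn : k ≤ n) : |x ^ k - 1| ≤ |x ^ n - 1| := by
  rcases le_total x 1 with h | h
  · rw [abs_of_nonpos (by simpa using pow_le_one₀ hx h),
      abs_of_nonpos (by simpa using pow_le_one₀ hx h)]
    exact neg_le_neg (sub_le_sub_right (pow_le_pow_of_le_one hx h hkn) 1)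
  · rw [abs_of_nonneg (by simpa using one_le_pow₀ h), abs_of_nonneg (by simpa using one_le_pow₀ h)]
    exact sub_le_sub_right (pow_le_pow_right₀ h hkn) 1

theorem abs_geom_sum_sub_card_le {R : Type*} [Ring R] [LinearOrder R] [IsStrictOrderedRing R]
    {x : R} (hx : 0 ≤ x) (n : ℕ) : |∑ k ∈ range n, x ^ k - n| ≤ n * |x ^ n - 1| := by
  calc |∑ k ∈ range n, x ^ k - n| = |∑ k ∈ range n, (x ^ k - 1)| := by simp
    _ ≤ ∑ k ∈ range n, |x ^ k - 1| := abs_sum_le_sum_abs _ _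
    _ ≤ ∑ _k ∈ range n, |x ^ n - 1| :=
      sum_le_sum fun k hk => abs_pow_sub_one_le_of_le hx (mem_range.1 hk).le
    _ = n * |x ^ n - 1| := by simp

section

variable {α : Type*} {l : Filter α} {x r : α → ℝ} {n : α → ℕ}

theorem tendsto_pow_of_tendsto_natCast_mul_sub_one {c : ℝ} (hx : Tendsto x l (𝓝 1))
    (hn : Tendsto (fun a => n a * (x a - 1)) l (𝓝 c)) :
    Tendsto (fun a => x a ^ n a) l (𝓝 (exp c)) := by
  have hlog : (fun a => n a * log (x a)) ~[l] fun a => n a * (x a - 1) :=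
    IsEquivalent.refl.mul (isEquivalent_log_sub_one.comp_tendsto hx)
  refine ((continuous_exp.tendsto c).comp (hlog.symm.tendsto_nhds hn)).congr' ?_
  filter_upwards [hx.eventually (lt_mem_nhds one_pos)] with a hxa
  simp [exp_nat_mul, exp_log hxa]

theorem tendsto_mul_geom_sum_of_tendsto_pow {p b : ℝ} (hpow : Tendsto (fun a => x a ^ n a) l (𝓝 p))
    (hslope : Tendsto (fun a => (x a - 1) / r a) l (𝓝 b)) (hb : b ≠ 0) :
    Tendsto (fun a => r a * ∑ k ∈ range (n a), x a ^ k) l (𝓝 ((p - 1) / b)) := by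
  refine ((hpow.sub_const 1).div hslope hb).congr' ?_
  filter_upwards [hslope.eventually_ne hb] with a ha
  have hr : r a ≠ 0 := by rintro h; simp [h] at ha
  have hx : x a ≠ 1 := by rintro h; simp [h] at ha
  rw [Pi.div_apply, geom_sum_eq hx]
  field_simp

theorem tendsto_mul_geom_sum_of_tendsto_pow_one {L : ℝ} (hx : ∀ᶠ a in l, 0 ≤ x a)
    (hpow : Tendsto (fun a => x a ^ n a) l (𝓝 1)) (hrn : Tendsto (fun a => r a * n a) l (𝓝 L)) :
    Tendsto (fun a => r a * ∑ k ∈ range (n a), x a ^ k) l (𝓝 L) := by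
  have hbound : Tendsto (fun a => |r a * n a| * |x a ^ n a - 1|) l (𝓝 0) := by
    simpa using hrn.abs.mul (hpow.sub_const 1).abs
  have hdiff : Tendsto (fun a => r a * ∑ k ∈ range (n a), x a ^ k - r a * n a) l (𝓝 0) := by
    refine squeeze_zero_norm' ?_ hbound
    filter_upwards [hx] with a hxa
    rw [Real.norm_eq_abs, ← mul_sub, abs_mul, abs_mul, mul_assoc, Nat.abs_cast]
    exact mul_le_mul_of_nonneg_left (abs_geom_sum_sub_card_le hxa _) (abs_nonneg _)
  simpa using hdiff.add hrn

end

theorem stmt13_general (β L : ℝ)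
    (ρ : ℝ → ℝ)
    (hρlim : Filter.Tendsto (fun r => (1 - ρ r) / r) (nhdsWithin 0 (Set.Ioi 0)) (nhds β))
    (ℓ : ℝ → ℕ)
    (hℓlim : Filter.Tendsto (fun r => r * (ℓ r : ℝ)) (nhdsWithin 0 (Set.Ioi 0)) (nhds L)) :
    Filter.Tendsto (fun r => r * ∑ k ∈ Finset.range (ℓ r), (ρ r) ^ k)
      (nhdsWithin 0 (Set.Ioi 0))
      (nhds (if β = 0 then L else (1 - Real.exp (-(β * L))) / β)) := by
  have hr : ∀ᶠ r in 𝓝[>] (0 : ℝ), r ≠ 0 := eventually_mem_nhdsWithin.mono fun r hr => hr.ne'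
  have hslope : Tendsto (fun r => (ρ r - 1) / r) (𝓝[>] 0) (𝓝 (-β)) := by
    simpa only [← neg_div, neg_sub] using hρlim.neg
  have hρ : Tendsto ρ (𝓝[>] 0) (𝓝 1) := by
    have h := (tendsto_nhdsWithin_of_tendsto_nhds tendsto_id).mul hslope
    have h1 := h.const_add 1
    rw [zero_mul, add_zero] at h1
    refine h1.congr' ?_
    filter_upwards [hr] with r hr
    rw [id, mul_div_cancel₀ _ hr, add_sub_cancel]
  have hpow : Tendsto (fun r => ρ r ^ ℓ r) (𝓝[>] 0) (𝓝 (exp (-(β * L)))) := by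
    refine tendsto_pow_of_tendsto_natCast_mul_sub_one hρ ?_
    rw [show -(β * L) = L * -β by ring]
    refine (hℓlim.mul hslope).congr' ?_
    filter_upwards [hr] with r hr
    field_simp
  split_ifs with hβ
  · subst hβ
    exact tendsto_mul_geom_sum_of_tendsto_pow_one (hρ.eventually (le_mem_nhds one_pos))
      (by simpa using hpow) hℓlim
  · convert tendsto_mul_geom_sum_of_tendsto_pow hpow hslope (neg_ne_zero.2 hβ) using 2
    rw [div_neg, ← neg_div, neg_sub]

/-- `r·Σ_{k<ℓ^{(r)}} (ρ^{(r)})^k` converges to `(1−e^{−βL})/β` (or `L` if `β = 0`). -/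
theorem stmt13 (β L : ℝ) (hL : 0 < L)
    (ρ : ℝ → ℝ) (hρpos : ∀ r ∈ Set.Ioc (0:ℝ) 1, 0 < ρ r)
    (hρlim : Filter.Tendsto (fun r => (1 - ρ r) / r) (nhdsWithin 0 (Set.Ioi 0)) (nhds β))
    (ℓ : ℝ → ℕ) (hℓpos : ∀ r ∈ Set.Ioc (0:ℝ) 1, 1 ≤ ℓ r)
    (hℓlim : Filter.Tendsto (fun r => r * (ℓ r : ℝ)) (nhdsWithin 0 (Set.Ioi 0)) (nhds L)) :
    Filter.Tendsto (fun r => r * ∑ k ∈ Finset.range (ℓ r), (ρ r) ^ k)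
      (nhdsWithin 0 (Set.Ioi 0))
      (nhds (if β = 0 then L else (1 - Real.exp (-(β * L))) / β)) :=
  stmt13_general β L ρ hρlim ℓ hℓlim
end

section
/- Assume additionally b₁ ≠ 0. Then as r ↓ 0: p₂^{(r)}(ℓ₁^{(r)})/p₁^{(r)}(ℓ₁^{(r)}) → 1; p₃^{(r)}(ℓ₁^{(r)}+1)/p₁^{(r)}(ℓ₁^{(r)}) → (λ₁+λ₂)/λ₂; and p₁^{(r)}(0)/p₁^{(r)}(ℓ₁^{(r)}) → ((λ₁+λ₂)/λ₂)·exp(β₁·ℓ₁). -/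
/-!
For fixed `r` the balance equations below the threshold are solved exactly (`a` stands for
`c₁μ`). The level-2 masses satisfy `a p₂(k) = λ₂ (p₂(0) + ⋯ + p₂(k-1))`, so their partial sums grow
geometrically with ratio `σ = (λ₂ + a)/a`; the flow balance across the cut between `k` and `k+1`
reads `a p₁(k+1) = λ₁ p₁(k) - λ₂ (p₂(0) + ⋯ + p₂(k-1))`. At the threshold `L` this gives
`a p₂(L) = λ₁ p₁(L)`, and solving the level-1 recursion backwards from `L` gives
`ρ^L p₁(0) = p₁(L) ∑_{j<L} t^j` with `ρ = λ₁/a`, `t = ρ/σ = λ₁/(λ₂ + a)`.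

In heavy traffic `t → λ₁/(λ₁+λ₂) < 1` while `L → ∞`, so the geometric sum tends to
`(λ₁+λ₂)/λ₂`; and `ρ = 1 - rβ₁ + o(r)` with `rL → ℓ₁`, so `ρ^L → exp(-β₁ℓ₁)`.
-/

open Filter Finset Topology

section BalanceEquations

variable {lam1 lam2 a : ℝ} {p1 p2 : ℕ → ℝ} {L : ℕ}

theorem mul_p2_eq_mul_sum_p2 (hq4 : lam2 * p2 0 = a * p2 1)
    (hq5 : ∀ ℓ, 1 ≤ ℓ → ℓ < L → (lam2 + a) * p2 ℓ = a * p2 (ℓ + 1))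
    {k : ℕ} (hk : 1 ≤ k) (hkL : k ≤ L) : a * p2 k = lam2 * ∑ j ∈ range k, p2 j := by
  induction k, hk using Nat.le_induction with
  | base => simpa using hq4.symm
  | succ k hk ih =>
    rw [sum_range_succ, ← hq5 k hk hkL]
    linear_combination ih (by omega)

theorem pow_mul_sum_p2 (ha : a ≠ 0) (hq4 : lam2 * p2 0 = a * p2 1)
    (hq5 : ∀ ℓ, 1 ≤ ℓ → ℓ < L → (lam2 + a) * p2 ℓ = a * p2 (ℓ + 1))
    {k : ℕ} (hk : 1 ≤ k) (i : ℕ) (hkL : k + i ≤ L) :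
    ((lam2 + a) / a) ^ i * ∑ j ∈ range k, p2 j = ∑ j ∈ range (k + i), p2 j := by
  induction i with
  | zero => simp
  | succ i ih =>
    have hflow := mul_p2_eq_mul_sum_p2 hq4 hq5 (k := k + i) (by omega) (by omega)
    rw [← add_assoc, sum_range_succ, pow_succ, mul_right_comm, ih (by omega)]
    field_simp
    linear_combination -hflow

theorem mul_p1_succ (hq1 : lam1 * p1 0 = a * p1 1)
    (hq2 : ∀ ℓ, 1 ≤ ℓ → ℓ < L →
      (lam1 + a) * p1 ℓ = lam1 * p1 (ℓ - 1) + a * p1 (ℓ + 1) + lam2 * p2 (ℓ - 1))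
    {k : ℕ} (hk : k < L) : a * p1 (k + 1) = lam1 * p1 k - lam2 * ∑ j ∈ range k, p2 j := by
  induction k with
  | zero => simpa using hq1.symm
  | succ k ih =>
    have h := hq2 (k + 1) (by omega) hk
    simp only [Nat.add_sub_cancel] at h
    rw [sum_range_succ]
    linear_combination ih (by omega) - h

theorem lam1_mul_p1_top (hL : 1 ≤ L) (hq1 : lam1 * p1 0 = a * p1 1)
    (hq2 : ∀ ℓ, 1 ≤ ℓ → ℓ < L →
      (lam1 + a) * p1 ℓ = lam1 * p1 (ℓ - 1) + a * p1 (ℓ + 1) + lam2 * p2 (ℓ - 1))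
    (hq3 : (lam1 + a) * p1 L = lam1 * p1 (L - 1) + lam2 * p2 (L - 1)) :
    lam1 * p1 L = lam2 * ∑ j ∈ range L, p2 j := by
  obtain ⟨m, rfl⟩ : ∃ m, L = m + 1 := ⟨L - 1, by omega⟩
  have hcut := mul_p1_succ hq1 hq2 (Nat.lt_succ_self m)
  simp only [Nat.add_sub_cancel] at hq3
  rw [sum_range_succ]
  linear_combination hq3 - hcut

theorem pow_mul_p1_sub (ha : a ≠ 0) (hσ : lam2 + a ≠ 0) (hq1 : lam1 * p1 0 = a * p1 1)
    (hq2 : ∀ ℓ, 1 ≤ ℓ → ℓ < L →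
      (lam1 + a) * p1 ℓ = lam1 * p1 (ℓ - 1) + a * p1 (ℓ + 1) + lam2 * p2 (ℓ - 1))
    (hq3 : (lam1 + a) * p1 L = lam1 * p1 (L - 1) + lam2 * p2 (L - 1))
    (hq4 : lam2 * p2 0 = a * p2 1)
    (hq5 : ∀ ℓ, 1 ≤ ℓ → ℓ < L → (lam2 + a) * p2 ℓ = a * p2 (ℓ + 1))
    (i : ℕ) (hi : i < L) :
    (lam1 / a) ^ i * p1 (L - i) = p1 L * ∑ j ∈ range (i + 1), (lam1 / (lam2 + a)) ^ j := by
  induction i with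
  | zero => simp
  | succ i ih =>
    obtain ⟨k, hk, rfl⟩ : ∃ k, 1 ≤ k ∧ L = k + (i + 1) := ⟨L - (i + 1), by omega, by omega⟩
    have hcut := mul_p1_succ hq1 hq2 (k := k) (by omega)
    have htop := lam1_mul_p1_top (by omega) hq1 hq2 hq3
    have hpow := pow_mul_sum_p2 ha hq4 hq5 hk (i + 1) le_rfl
    have ih' := ih (by omega)
    rw [show k + (i + 1) - i = k + 1 by omega] at ih'
    rw [show k + (i + 1) - (i + 1) = k by omega, sum_range_succ]
    set ρ := lam1 / a
    set σ := (lam2 + a) / a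
    set t := lam1 / (lam2 + a)
    have hρ : ρ * a = lam1 := div_mul_cancel₀ _ ha
    have htσ : (t * σ) ^ (i + 1) = ρ ^ (i + 1) := by
      congr 1
      simp only [t, σ, ρ]
      field_simp
    have hσ0 : σ ≠ 0 := div_ne_zero hσ ha
    clear_value ρ σ t
    -- `ρ p₁(k) = p₁(k+1) + λ₂ T / a` by the cut at `k`, and `λ₂ σ^(i+1) T = λ₁ p₁(L)` at the top,
    -- where `T = p₂(0) + ⋯ + p₂(k-1)`.
    refine mul_left_cancel₀ (mul_ne_zero ha (pow_ne_zero (i + 1) hσ0)) ?_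
    linear_combination a * σ ^ (i + 1) * ih' + σ ^ (i + 1) * ρ ^ i * p1 k * hρ
      - σ ^ (i + 1) * ρ ^ i * hcut - a * p1 (k + (i + 1)) * htσ
      - ρ ^ i * p1 (k + (i + 1)) * hρ + ρ ^ i * lam2 * hpow - ρ ^ i * htop

theorem pow_mul_p1_zero (ha : a ≠ 0) (hσ : lam2 + a ≠ 0) (hL : 1 ≤ L)
    (hq1 : lam1 * p1 0 = a * p1 1)
    (hq2 : ∀ ℓ, 1 ≤ ℓ → ℓ < L →
      (lam1 + a) * p1 ℓ = lam1 * p1 (ℓ - 1) + a * p1 (ℓ + 1) + lam2 * p2 (ℓ - 1))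
    (hq3 : (lam1 + a) * p1 L = lam1 * p1 (L - 1) + lam2 * p2 (L - 1))
    (hq4 : lam2 * p2 0 = a * p2 1)
    (hq5 : ∀ ℓ, 1 ≤ ℓ → ℓ < L → (lam2 + a) * p2 ℓ = a * p2 (ℓ + 1)) :
    (lam1 / a) ^ L * p1 0 = p1 L * ∑ j ∈ range L, (lam1 / (lam2 + a)) ^ j := by
  obtain ⟨m, rfl⟩ : ∃ m, L = m + 1 := ⟨L - 1, by omega⟩
  have h := pow_mul_p1_sub ha hσ hq1 hq2 hq3 hq4 hq5 m (by omega)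
  rw [show m + 1 - m = 1 by omega] at h
  rw [← h, pow_succ, mul_assoc, div_mul_eq_mul_div, hq1, mul_div_cancel_left₀ _ ha]

theorem balance_ratios {c : ℝ} {p3 : ℕ → ℝ} (ha : a ≠ 0) (hσ : lam2 + a ≠ 0) (hlam1 : lam1 ≠ 0)
    (hc : c ≠ 0) (hL : 1 ≤ L) (hp1L : p1 L ≠ 0)
    (hq1 : lam1 * p1 0 = a * p1 1)
    (hq2 : ∀ ℓ, 1 ≤ ℓ → ℓ < L →
      (lam1 + a) * p1 ℓ = lam1 * p1 (ℓ - 1) + a * p1 (ℓ + 1) + lam2 * p2 (ℓ - 1))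
    (hq3 : (lam1 + a) * p1 L = lam1 * p1 (L - 1) + lam2 * p2 (L - 1))
    (hq4 : lam2 * p2 0 = a * p2 1)
    (hq5 : ∀ ℓ, 1 ≤ ℓ → ℓ < L → (lam2 + a) * p2 ℓ = a * p2 (ℓ + 1))
    (hq6 : (lam2 + a) * p2 L = c * p3 (L + 1)) :
    p2 L / p1 L = lam1 / a ∧
    p3 (L + 1) / p1 L = (lam2 + a) * lam1 / (c * a) ∧
    p1 0 / p1 L = (∑ j ∈ range L, (lam1 / (lam2 + a)) ^ j) / (lam1 / a) ^ L := by
  have htop : a * p2 L = lam1 * p1 L := by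
    rw [mul_p2_eq_mul_sum_p2 hq4 hq5 hL le_rfl, lam1_mul_p1_top hL hq1 hq2 hq3]
  refine ⟨?_, ?_, ?_⟩
  · rw [div_eq_div_iff hp1L ha]
    linear_combination htop
  · rw [div_eq_div_iff hp1L (mul_ne_zero hc ha)]
    linear_combination (lam2 + a) * htop - a * hq6
  · rw [div_eq_div_iff hp1L (pow_ne_zero L (div_ne_zero hlam1 ha))]
    linear_combination pow_mul_p1_zero ha hσ hL hq1 hq2 hq3 hq4 hq5

end BalanceEquations

section Asymptotics

variable {α : Type*} {l : Filter α}

theorem tendsto_one_add_pow_exp_of_tendsto_mul {u : α → ℝ} {n : α → ℕ} {c : ℝ}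
    (hu : Tendsto u l (𝓝 0)) (hnu : Tendsto (fun x => n x * u x) l (𝓝 c)) :
    Tendsto (fun x => (1 + u x) ^ n x) l (𝓝 (Real.exp c)) := by
  have hpos : ∀ᶠ x in l, 0 < 1 + u x := by
    filter_upwards [hu.eventually_const_lt (show (-1 : ℝ) < 0 by norm_num)] with x hx
    linarith
  -- `1 - 1/y ≤ log y ≤ y - 1` squeezes `n log (1 + u)` between `n u / (1 + u)` and `n u`.
  have hlower : Tendsto (fun x => n x * u x / (1 + u x)) l (𝓝 c) := by
    have h := hnu.div (tendsto_const_nhds.add hu) (by norm_num : (1 : ℝ) + 0 ≠ 0)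
    rwa [add_zero, div_one] at h
  have hlog : Tendsto (fun x => n x * Real.log (1 + u x)) l (𝓝 c) := by
    refine tendsto_of_tendsto_of_tendsto_of_le_of_le' hlower hnu ?_ ?_
    · filter_upwards [hpos] with x hx
      have h := Real.one_sub_inv_le_log_of_pos hx
      rw [mul_div_assoc]
      gcongr
      calc u x / (1 + u x) = 1 - (1 + u x)⁻¹ := by field_simp; ring
        _ ≤ _ := h
    · filter_upwards [hpos] with x hx
      have h := Real.log_le_sub_one_of_pos hx
      gcongr
      linarith
  refine ((Real.continuous_exp.tendsto c).comp hlog).congr' ?_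
  filter_upwards [hpos] with x hx
  simp [← Real.log_pow, Real.exp_log (pow_pos hx _)]

theorem tendsto_pow_nhds_zero_of_tendsto {x : α → ℝ} {n : α → ℕ} {x₀ : ℝ}
    (hx : Tendsto x l (𝓝 x₀)) (hx₀ : |x₀| < 1) (hn : Tendsto n l atTop) :
    Tendsto (fun a => x a ^ n a) l (𝓝 0) := by
  obtain ⟨q, hxq, hq⟩ := exists_between hx₀
  have hle : ∀ᶠ a in l, |x a| ≤ q :=
    (hx.abs.eventually_lt_const hxq).mono fun a h => h.le
  have hq0 : 0 ≤ q := (abs_nonneg _).trans hxq.le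
  refine squeeze_zero_norm' ?_ ((tendsto_pow_atTop_nhds_zero_of_lt_one hq0 hq).comp hn)
  filter_upwards [hle] with a ha
  rw [norm_pow, Real.norm_eq_abs]
  exact pow_le_pow_left₀ (abs_nonneg _) ha _

theorem tendsto_geom_sum_of_tendsto {x : α → ℝ} {n : α → ℕ} {x₀ : ℝ}
    (hx : Tendsto x l (𝓝 x₀)) (hx₀ : |x₀| < 1) (hn : Tendsto n l atTop) :
    Tendsto (fun a => ∑ j ∈ range (n a), x a ^ j) l (𝓝 (1 - x₀)⁻¹) := by
  have hx₀1 : x₀ - 1 ≠ 0 := by linarith [le_abs_self x₀]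
  have hlim := ((tendsto_pow_nhds_zero_of_tendsto hx hx₀ hn).sub_const 1).div
    (hx.sub_const 1) hx₀1
  rw [zero_sub, neg_div, ← div_neg, neg_sub, one_div] at hlim
  refine hlim.congr' ?_
  filter_upwards [hx.eventually_ne (show x₀ ≠ 1 by linarith [le_abs_self x₀])] with a ha
  exact (geom_sum_eq ha _).symm

end Asymptotics

section HeavyTraffic

theorem tendsto_div_of_tendsto_sub_mul_div {f g : ℝ → ℝ} {G b : ℝ}
    (hf : Tendsto (fun r => (f r - r * g r * b) / r) (𝓝[>] 0) (𝓝 0))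
    (hg : Tendsto g (𝓝[>] 0) (𝓝 G)) :
    Tendsto (fun r => f r / r) (𝓝[>] 0) (𝓝 (G * b)) := by
  refine (by simpa using hf.add (hg.mul_const b) : Tendsto _ _ (𝓝 (G * b))).congr' ?_
  filter_upwards [self_mem_nhdsWithin] with r (hr : 0 < r)
  field_simp
  ring

theorem tendsto_nhds_zero_of_tendsto_div_id {f : ℝ → ℝ} {c : ℝ}
    (hf : Tendsto (fun r => f r / r) (𝓝[>] 0) (𝓝 c)) : Tendsto f (𝓝[>] 0) (𝓝 0) := by
  have hid : Tendsto (fun r : ℝ => r) (𝓝[>] 0) (𝓝 0) := tendsto_nhdsWithin_of_tendsto_nhds tendsto_id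
  have h : Tendsto (fun r => f r / r * r) (𝓝[>] 0) (𝓝 0) := by simpa using hf.mul hid
  refine h.congr' ?_
  filter_upwards [self_mem_nhdsWithin] with r (hr : 0 < r)
  field_simp

theorem eq_of_tendsto_sub_div {f g : ℝ → ℝ} {F G c : ℝ} (hf : Tendsto f (𝓝[>] 0) (𝓝 F))
    (hg : Tendsto g (𝓝[>] 0) (𝓝 G)) (hfg : Tendsto (fun r => (f r - g r) / r) (𝓝[>] 0) (𝓝 c)) :
    F = G :=
  sub_eq_zero.mp (tendsto_nhds_unique (hf.sub hg) (tendsto_nhds_zero_of_tendsto_div_id hfg))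

theorem tendsto_div_pow_exp {lam c : ℝ → ℝ} {n : ℝ → ℕ} {Λ B ℓ : ℝ}
    (hlam : Tendsto lam (𝓝[>] 0) (𝓝 Λ)) (hc : Tendsto c (𝓝[>] 0) (𝓝 Λ)) (hΛ : Λ ≠ 0)
    (hB : Tendsto (fun r => (c r - lam r) / r) (𝓝[>] 0) (𝓝 B))
    (hn : Tendsto (fun r => r * n r) (𝓝[>] 0) (𝓝 ℓ)) :
    Tendsto (fun r => (lam r / c r) ^ n r) (𝓝[>] 0) (𝓝 (Real.exp (-(B / Λ * ℓ)))) := by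
  have hu : Tendsto (fun r => lam r / c r - 1) (𝓝[>] 0) (𝓝 0) := by
    simpa [div_self hΛ] using (hlam.div hc hΛ).sub_const 1
  have hnu : Tendsto (fun r => n r * (lam r / c r - 1)) (𝓝[>] 0) (𝓝 (-(B / Λ * ℓ))) := by
    refine ((hB.div hc hΛ).mul hn).neg.congr' ?_
    filter_upwards [self_mem_nhdsWithin, hc.eventually_ne hΛ] with r (hr : 0 < r) hcr
    simp only [Pi.div_apply]
    field_simp
    ring
  simpa using tendsto_one_add_pow_exp_of_tendsto_mul hu hnu

theorem tendsto_atTop_of_tendsto_mul_id {n : ℝ → ℕ} {ℓ : ℝ}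
    (hn : Tendsto (fun r => r * n r) (𝓝[>] 0) (𝓝 ℓ)) (hℓ : 0 < ℓ) :
    Tendsto n (𝓝[>] 0) atTop := by
  refine tendsto_natCast_atTop_iff.mp ((hn.pos_mul_atTop hℓ tendsto_inv_nhdsGT_zero).congr' ?_)
  filter_upwards [self_mem_nhdsWithin] with r (hr : 0 < r)
  field_simp

theorem tendsto_balance_ratios {lam1 lam2 a c : ℝ → ℝ} {n : ℝ → ℕ} {Λ₁ Λ₂ B ℓ : ℝ}
    (hlam1 : Tendsto lam1 (𝓝[>] 0) (𝓝 Λ₁)) (hlam2 : Tendsto lam2 (𝓝[>] 0) (𝓝 Λ₂))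
    (ha : Tendsto a (𝓝[>] 0) (𝓝 Λ₁)) (hc : Tendsto c (𝓝[>] 0) (𝓝 Λ₂))
    (hΛ₁ : 0 < Λ₁) (hΛ₂ : 0 < Λ₂) (hB : Tendsto (fun r => (a r - lam1 r) / r) (𝓝[>] 0) (𝓝 B))
    (hn : Tendsto (fun r => r * n r) (𝓝[>] 0) (𝓝 ℓ)) (hℓ : 0 < ℓ) :
    Tendsto (fun r => lam1 r / a r) (𝓝[>] 0) (𝓝 1) ∧
    Tendsto (fun r => (lam2 r + a r) * lam1 r / (c r * a r)) (𝓝[>] 0)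
      (𝓝 ((Λ₁ + Λ₂) / Λ₂)) ∧
    Tendsto (fun r => (∑ j ∈ range (n r), (lam1 r / (lam2 r + a r)) ^ j) / (lam1 r / a r) ^ n r)
      (𝓝[>] 0) (𝓝 ((Λ₁ + Λ₂) / Λ₂ * Real.exp (B / Λ₁ * ℓ))) := by
  have hsum : Λ₂ + Λ₁ ≠ 0 := by positivity
  refine ⟨?_, ?_, ?_⟩
  · have h := hlam1.div ha hΛ₁.ne'
    rwa [div_self hΛ₁.ne'] at h
  · have h := ((hlam2.add ha).mul hlam1).div (hc.mul ha) (by positivity)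
    rwa [show (Λ₂ + Λ₁) * Λ₁ / (Λ₂ * Λ₁) = (Λ₁ + Λ₂) / Λ₂ by field_simp; ring] at h
  · have ht1 : |Λ₁ / (Λ₂ + Λ₁)| < 1 := by
      rw [abs_of_pos (by positivity), div_lt_one (by positivity)]
      linarith
    have hgeom := tendsto_geom_sum_of_tendsto (hlam1.div (hlam2.add ha) hsum) ht1
      (tendsto_atTop_of_tendsto_mul_id hn hℓ)
    have h := hgeom.div (tendsto_div_pow_exp hlam1 ha hΛ₁.ne' hB hn) (Real.exp_pos _).ne'
    rwa [Real.exp_neg, div_inv_eq_mul, one_sub_div hsum, add_sub_cancel_right, inv_div,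
      add_comm Λ₂] at h

end HeavyTraffic

theorem stmt14_general
    (lam1 lam2 c1 c2 mu : ℝ → ℝ) (ell : ℝ → ℕ) (p1 p2 p3 : ℝ → ℕ → ℝ)
    (lam1L lam2L c1L c2L muL b1 b2 ℓ₁ β1 : ℝ)
    (hpos : ∀ r ∈ Set.Ioc (0:ℝ) 1,
      0 < lam1 r ∧ 0 < lam2 r ∧ 0 < c1 r ∧ 0 < c2 r ∧ 0 < mu r ∧ 1 ≤ ell r)
    (hp1pos : ∀ r ∈ Set.Ioc (0:ℝ) 1, ∀ ℓ ≤ ell r, 0 < p1 r ℓ)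
    (hbal1 : ∀ r ∈ Set.Ioc (0:ℝ) 1, lam1 r * p1 r 0 = c1 r * mu r * p1 r 1)
    (hbal2 : ∀ r ∈ Set.Ioc (0:ℝ) 1, ∀ ℓ, 1 ≤ ℓ → ℓ ≤ ell r - 1 →
      (lam1 r + c1 r * mu r) * p1 r ℓ
        = lam1 r * p1 r (ℓ - 1) + c1 r * mu r * p1 r (ℓ + 1) + lam2 r * p2 r (ℓ - 1))
    (hbal3 : ∀ r ∈ Set.Ioc (0:ℝ) 1,
      (lam1 r + c1 r * mu r) * p1 r (ell r)
        = lam1 r * p1 r (ell r - 1) + lam2 r * p2 r (ell r - 1))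
    (hbal4 : ∀ r ∈ Set.Ioc (0:ℝ) 1, lam2 r * p2 r 0 = c1 r * mu r * p2 r 1)
    (hbal5 : ∀ r ∈ Set.Ioc (0:ℝ) 1, ∀ ℓ, 1 ≤ ℓ → ℓ ≤ ell r - 1 →
      (lam2 r + c1 r * mu r) * p2 r ℓ = c1 r * mu r * p2 r (ℓ + 1))
    (hbal6 : ∀ r ∈ Set.Ioc (0:ℝ) 1,
      (lam2 r + c1 r * mu r) * p2 r (ell r) = c2 r * mu r * p3 r (ell r + 1))
    (hlam1lim : Filter.Tendsto lam1 (nhdsWithin 0 (Set.Ioi 0)) (nhds lam1L))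
    (hlam2lim : Filter.Tendsto lam2 (nhdsWithin 0 (Set.Ioi 0)) (nhds lam2L))
    (hc1lim : Filter.Tendsto c1 (nhdsWithin 0 (Set.Ioi 0)) (nhds c1L))
    (hc2lim : Filter.Tendsto c2 (nhdsWithin 0 (Set.Ioi 0)) (nhds c2L))
    (hmulim : Filter.Tendsto mu (nhdsWithin 0 (Set.Ioi 0)) (nhds muL))
    (hlam1L : 0 < lam1L) (hlam2L : 0 < lam2L) (hc1L : 0 < c1L)
    (hmuL : 0 < muL)
    (hhv1 : Filter.Tendsto (fun r => (c1 r * mu r - lam1 r - r * mu r * b1) / r)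
      (nhdsWithin 0 (Set.Ioi 0)) (nhds 0))
    (hhv2 : Filter.Tendsto (fun r => (c2 r * mu r - lam2 r - r * mu r * b2) / r)
      (nhdsWithin 0 (Set.Ioi 0)) (nhds 0))
    (helllim : Filter.Tendsto (fun r => (r * (ell r : ℝ) - ℓ₁) / r)
      (nhdsWithin 0 (Set.Ioi 0)) (nhds 0))
    (hℓ₁ : 0 < ℓ₁)
    (hβ1 : β1 = b1 / c1L) :
    Filter.Tendsto (fun r => p2 r (ell r) / p1 r (ell r))
        (nhdsWithin 0 (Set.Ioi 0)) (nhds 1)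
    ∧ Filter.Tendsto (fun r => p3 r (ell r + 1) / p1 r (ell r))
        (nhdsWithin 0 (Set.Ioi 0)) (nhds ((lam1L + lam2L) / lam2L))
    ∧ Filter.Tendsto (fun r => p1 r 0 / p1 r (ell r))
        (nhdsWithin 0 (Set.Ioi 0))
        (nhds ((lam1L + lam2L) / lam2L * Real.exp (β1 * ℓ₁))) := by
  have hkey (r : ℝ) (hr : r ∈ Set.Ioc (0:ℝ) 1) :=
    let ⟨h1, h2, h3, h4, h5, h6⟩ := hpos r hr
    balance_ratios (p3 := p3 r) (mul_pos h3 h5).ne' (by positivity) h1.ne' (mul_pos h4 h5).ne' h6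
      (hp1pos r hr _ le_rfl).ne' (hbal1 r hr) (fun ℓ h h' => hbal2 r hr ℓ h (by omega))
      (hbal3 r hr) (hbal4 r hr) (fun ℓ h h' => hbal5 r hr ℓ h (by omega)) (hbal6 r hr)
  have hev : ∀ᶠ r in 𝓝[>] (0:ℝ), r ∈ Set.Ioc (0:ℝ) 1 := Ioc_mem_nhdsGT zero_lt_one
  have hg1 := tendsto_div_of_tendsto_sub_mul_div hhv1 hmulim
  have hEq1 : c1L * muL = lam1L := eq_of_tendsto_sub_div (hc1lim.mul hmulim) hlam1lim hg1
  have hEq2 : c2L * muL = lam2L := eq_of_tendsto_sub_div (hc2lim.mul hmulim) hlam2lim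
    (tendsto_div_of_tendsto_sub_mul_div hhv2 hmulim)
  have hrℓ : Tendsto (fun r => r * (ell r : ℝ)) (𝓝[>] 0) (𝓝 ℓ₁) := by
    simpa using (tendsto_nhds_zero_of_tendsto_div_id helllim).add_const ℓ₁
  have hβ : muL * b1 / lam1L = β1 := by
    rw [hβ1, ← hEq1]
    field_simp
  obtain ⟨h1, h2, h3⟩ := tendsto_balance_ratios hlam1lim hlam2lim
    (hEq1 ▸ hc1lim.mul hmulim) (hEq2 ▸ hc2lim.mul hmulim) hlam1L hlam2L hg1 hrℓ hℓ₁
  rw [hβ] at h3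
  exact ⟨h1.congr' (hev.mono fun r hr => (hkey r hr).1.symm),
    h2.congr' (hev.mono fun r hr => (hkey r hr).2.1.symm),
    h3.congr' (hev.mono fun r hr => (hkey r hr).2.2.symm)⟩

theorem stmt14
    (lam1 lam2 c1 c2 mu : ℝ → ℝ) (ell : ℝ → ℕ) (p1 p2 p3 : ℝ → ℕ → ℝ)
    (lam1L lam2L c1L c2L muL b1 b2 ℓ₁ β1 β2 : ℝ)
    (hpos : ∀ r ∈ Set.Ioc (0:ℝ) 1,
      0 < lam1 r ∧ 0 < lam2 r ∧ 0 < c1 r ∧ 0 < c2 r ∧ 0 < mu r ∧ 1 ≤ ell r)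
    (hp1pos : ∀ r ∈ Set.Ioc (0:ℝ) 1, ∀ ℓ ≤ ell r, 0 < p1 r ℓ)
    (hp2pos : ∀ r ∈ Set.Ioc (0:ℝ) 1, ∀ ℓ ≤ ell r, 0 < p2 r ℓ)
    (hp3pos : ∀ r ∈ Set.Ioc (0:ℝ) 1, ∀ ℓ, ell r + 1 ≤ ℓ → 0 < p3 r ℓ)
    (hbal1 : ∀ r ∈ Set.Ioc (0:ℝ) 1, lam1 r * p1 r 0 = c1 r * mu r * p1 r 1)
    (hbal2 : ∀ r ∈ Set.Ioc (0:ℝ) 1, ∀ ℓ, 1 ≤ ℓ → ℓ ≤ ell r - 1 →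
      (lam1 r + c1 r * mu r) * p1 r ℓ
        = lam1 r * p1 r (ℓ - 1) + c1 r * mu r * p1 r (ℓ + 1) + lam2 r * p2 r (ℓ - 1))
    (hbal3 : ∀ r ∈ Set.Ioc (0:ℝ) 1,
      (lam1 r + c1 r * mu r) * p1 r (ell r)
        = lam1 r * p1 r (ell r - 1) + lam2 r * p2 r (ell r - 1))
    (hbal4 : ∀ r ∈ Set.Ioc (0:ℝ) 1, lam2 r * p2 r 0 = c1 r * mu r * p2 r 1)
    (hbal5 : ∀ r ∈ Set.Ioc (0:ℝ) 1, ∀ ℓ, 1 ≤ ℓ → ℓ ≤ ell r - 1 →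
      (lam2 r + c1 r * mu r) * p2 r ℓ = c1 r * mu r * p2 r (ℓ + 1))
    (hbal6 : ∀ r ∈ Set.Ioc (0:ℝ) 1,
      (lam2 r + c1 r * mu r) * p2 r (ell r) = c2 r * mu r * p3 r (ell r + 1))
    (hbal7 : ∀ r ∈ Set.Ioc (0:ℝ) 1,
      (lam2 r + c2 r * mu r) * p3 r (ell r + 1)
        = lam1 r * p1 r (ell r) + lam2 r * p2 r (ell r) + c2 r * mu r * p3 r (ell r + 2))
    (hbal8 : ∀ r ∈ Set.Ioc (0:ℝ) 1, ∀ ℓ, ell r + 1 ≤ ℓ →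
      lam2 r * p3 r ℓ = c2 r * mu r * p3 r (ℓ + 1))
    (hnorm : ∀ r ∈ Set.Ioc (0:ℝ) 1,
      (∑ ℓ ∈ Finset.range (ell r + 1), p1 r ℓ)
        + (∑ ℓ ∈ Finset.range (ell r + 1), p2 r ℓ)
        + (∑' n : ℕ, p3 r (ell r + 1 + n)) = 1)
    (hstable : ∀ r ∈ Set.Ioc (0:ℝ) 1, lam2 r < c2 r * mu r)
    (hlam1lim : Filter.Tendsto lam1 (nhdsWithin 0 (Set.Ioi 0)) (nhds lam1L))
    (hlam2lim : Filter.Tendsto lam2 (nhdsWithin 0 (Set.Ioi 0)) (nhds lam2L))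
    (hc1lim : Filter.Tendsto c1 (nhdsWithin 0 (Set.Ioi 0)) (nhds c1L))
    (hc2lim : Filter.Tendsto c2 (nhdsWithin 0 (Set.Ioi 0)) (nhds c2L))
    (hmulim : Filter.Tendsto mu (nhdsWithin 0 (Set.Ioi 0)) (nhds muL))
    (hlam1L : 0 < lam1L) (hlam2L : 0 < lam2L) (hc1L : 0 < c1L) (hc2L : 0 < c2L)
    (hmuL : 0 < muL)
    (hhv1 : Filter.Tendsto (fun r => (c1 r * mu r - lam1 r - r * mu r * b1) / r)
      (nhdsWithin 0 (Set.Ioi 0)) (nhds 0))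
    (hhv2 : Filter.Tendsto (fun r => (c2 r * mu r - lam2 r - r * mu r * b2) / r)
      (nhdsWithin 0 (Set.Ioi 0)) (nhds 0))
    (hb2 : 0 < b2)
    (helllim : Filter.Tendsto (fun r => (r * (ell r : ℝ) - ℓ₁) / r)
      (nhdsWithin 0 (Set.Ioi 0)) (nhds 0))
    (hℓ₁ : 0 < ℓ₁)
    (hβ1 : β1 = b1 / c1L) (hβ2 : β2 = b2 / c2L)
    (hb1 : b1 ≠ 0) :
    Filter.Tendsto (fun r => p2 r (ell r) / p1 r (ell r))
        (nhdsWithin 0 (Set.Ioi 0)) (nhds 1)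
    ∧ Filter.Tendsto (fun r => p3 r (ell r + 1) / p1 r (ell r))
        (nhdsWithin 0 (Set.Ioi 0)) (nhds ((lam1L + lam2L) / lam2L))
    ∧ Filter.Tendsto (fun r => p1 r 0 / p1 r (ell r))
        (nhdsWithin 0 (Set.Ioi 0))
        (nhds ((lam1L + lam2L) / lam2L * Real.exp (β1 * ℓ₁))) :=
  stmt14_general lam1 lam2 c1 c2 mu ell p1 p2 p3 lam1L lam2L c1L c2L muL b1 b2 ℓ₁ β1 hpos hp1pos
    hbal1 hbal2 hbal3 hbal4 hbal5 hbal6 hlam1lim hlam2lim hc1lim hc2lim hmulim hlam1L hlam2L hc1L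
    hmuL hhv1 hhv2 helllim hℓ₁ hβ1
end

section
/- Assume additionally b₁ ≠ 0. Then Σ_{ℓ=0}^{ℓ₁^{(r)}} p₂^{(r)}(ℓ) → 0 as r ↓ 0; that is, the total stationary probability of the phase in which the second arrival rate is active while the queue length is at or below the threshold vanishes in the heavy-traffic limit. -/
/-!
Summing the balance equations of the second phase below the threshold telescopes to
`λ₂ · Σ_{ℓ ≤ ℓ₁} p₂(ℓ) = (λ₂ + c₁μ) p₂(ℓ₁) = c₂μ p₃(ℓ₁ + 1)`. Above the threshold `p₃` is
geometric with ratio `λ₂/(c₂μ)`, so this flux is `(c₂μ - λ₂) · Σ p₃`. With the normalization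
and `Σ p₁ ≥ 0` it follows that `Σ_{ℓ ≤ ℓ₁} p₂(ℓ) ≤ 1 - λ₂/(c₂μ)`, which vanishes because
`c₂μ - λ₂ = O(r)`.
-/

open Filter Topology Finset

lemma mul_sum_range_eq_mul_of_recurrence {R : Type*} [CommRing R] {a c : R} {q : ℕ → R} {L : ℕ}
    (h0 : a * q 0 = c * q 1)
    (hstep : ∀ ℓ, 1 ≤ ℓ → ℓ ≤ L - 1 → (a + c) * q ℓ = c * q (ℓ + 1)) :
    ∀ n, 1 ≤ n → n ≤ L → a * ∑ ℓ ∈ range n, q ℓ = c * q n := by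
  intro n hn hnL
  induction n, hn using Nat.le_induction with
  | base => simpa using h0
  | succ n hn ih =>
    rw [sum_range_succ, mul_add, ih (by omega), ← hstep n hn (by omega)]
    ring

lemma sub_mul_tsum_eq_of_recurrence {a d : ℝ} {e : ℕ → ℝ} {m : ℕ}
    (ha : 0 ≤ a) (had : a < d) (hrec : ∀ ℓ, m ≤ ℓ → a * e ℓ = d * e (ℓ + 1)) :
    (d - a) * ∑' n, e (m + n) = d * e m := by
  have hd : 0 < d := ha.trans_lt had
  have hgeom : ∀ n, e (m + n) = (a / d) ^ n * e m := by
    intro n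
    induction n with
    | zero => simp
    | succ n ih =>
      have h := hrec (m + n) (by omega)
      rw [← add_assoc, pow_succ, mul_comm _ (a / d), mul_assoc, ← ih]
      field_simp
      linarith
  rw [tsum_congr hgeom, tsum_mul_right,
    tsum_geometric_of_lt_one (div_nonneg ha hd.le) ((div_lt_one hd).2 had)]
  have hgap : d - a ≠ 0 := by linarith
  field_simp

lemma mul_sum_range_succ_eq_sub_mul_tsum {a c d : ℝ} {q e : ℕ → ℝ} {L : ℕ}
    (ha : 0 ≤ a) (had : a < d) (hL : 1 ≤ L)
    (h0 : a * q 0 = c * q 1)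
    (hstep : ∀ ℓ, 1 ≤ ℓ → ℓ ≤ L - 1 → (a + c) * q ℓ = c * q (ℓ + 1))
    (hexit : (a + c) * q L = d * e (L + 1))
    (htail : ∀ ℓ, L + 1 ≤ ℓ → a * e ℓ = d * e (ℓ + 1)) :
    a * ∑ ℓ ∈ range (L + 1), q ℓ = (d - a) * ∑' n, e (L + 1 + n) := by
  rw [sub_mul_tsum_eq_of_recurrence ha had htail, ← hexit, sum_range_succ, mul_add,
    mul_sum_range_eq_mul_of_recurrence h0 hstep L hL le_rfl]
  ring

lemma sum_range_succ_le_sub_div_of_balance {a c d S : ℝ} {q e : ℕ → ℝ} {L : ℕ}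
    (ha : 0 ≤ a) (had : a < d) (hL : 1 ≤ L)
    (h0 : a * q 0 = c * q 1)
    (hstep : ∀ ℓ, 1 ≤ ℓ → ℓ ≤ L - 1 → (a + c) * q ℓ = c * q (ℓ + 1))
    (hexit : (a + c) * q L = d * e (L + 1))
    (htail : ∀ ℓ, L + 1 ≤ ℓ → a * e ℓ = d * e (ℓ + 1))
    (hS : 0 ≤ S) (hnorm : S + ∑ ℓ ∈ range (L + 1), q ℓ + ∑' n, e (L + 1 + n) = 1) :
    ∑ ℓ ∈ range (L + 1), q ℓ ≤ (d - a) / d := by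
  have hflux := mul_sum_range_succ_eq_sub_mul_tsum ha had hL h0 hstep hexit htail
  rw [le_div_iff₀ (ha.trans_lt had)]
  nlinarith

lemma tendsto_zero_of_tendsto_sub_mul_div {f g : ℝ → ℝ} {gL b : ℝ}
    (hf : Tendsto (fun r => (f r - r * g r * b) / r) (𝓝[>] 0) (𝓝 0))
    (hg : Tendsto g (𝓝[>] 0) (𝓝 gL)) :
    Tendsto f (𝓝[>] 0) (𝓝 0) := by
  have hr : Tendsto (fun r : ℝ => r) (𝓝[>] 0) (𝓝 0) :=
    tendsto_nhdsWithin_of_tendsto_nhds tendsto_id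
  have h := (hr.mul hf).add ((hr.mul hg).mul_const b)
  rw [zero_mul, zero_mul, zero_mul, add_zero] at h
  refine h.congr' ?_
  filter_upwards [self_mem_nhdsWithin] with r (hr0 : 0 < r)
  field_simp
  ring

theorem stmt16_general
    (lam1 lam2 c1 c2 mu : ℝ → ℝ) (ell : ℝ → ℕ) (p1 p2 p3 : ℝ → ℕ → ℝ)
    (lam2L muL b2 : ℝ)
    (hpos : ∀ r ∈ Set.Ioc (0:ℝ) 1,
      0 < lam1 r ∧ 0 < lam2 r ∧ 0 < c1 r ∧ 0 < c2 r ∧ 0 < mu r ∧ 1 ≤ ell r)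
    (hp1pos : ∀ r ∈ Set.Ioc (0:ℝ) 1, ∀ ℓ ≤ ell r, 0 < p1 r ℓ)
    (hp2pos : ∀ r ∈ Set.Ioc (0:ℝ) 1, ∀ ℓ ≤ ell r, 0 < p2 r ℓ)
    (hbal4 : ∀ r ∈ Set.Ioc (0:ℝ) 1, lam2 r * p2 r 0 = c1 r * mu r * p2 r 1)
    (hbal5 : ∀ r ∈ Set.Ioc (0:ℝ) 1, ∀ ℓ, 1 ≤ ℓ → ℓ ≤ ell r - 1 →
      (lam2 r + c1 r * mu r) * p2 r ℓ = c1 r * mu r * p2 r (ℓ + 1))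
    (hbal6 : ∀ r ∈ Set.Ioc (0:ℝ) 1,
      (lam2 r + c1 r * mu r) * p2 r (ell r) = c2 r * mu r * p3 r (ell r + 1))
    (hbal8 : ∀ r ∈ Set.Ioc (0:ℝ) 1, ∀ ℓ, ell r + 1 ≤ ℓ →
      lam2 r * p3 r ℓ = c2 r * mu r * p3 r (ℓ + 1))
    (hnorm : ∀ r ∈ Set.Ioc (0:ℝ) 1,
      (∑ ℓ ∈ Finset.range (ell r + 1), p1 r ℓ)
        + (∑ ℓ ∈ Finset.range (ell r + 1), p2 r ℓ)
        + (∑' n : ℕ, p3 r (ell r + 1 + n)) = 1)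
    (hstable : ∀ r ∈ Set.Ioc (0:ℝ) 1, lam2 r < c2 r * mu r)
    (hlam2lim : Filter.Tendsto lam2 (nhdsWithin 0 (Set.Ioi 0)) (nhds lam2L))
    (hmulim : Filter.Tendsto mu (nhdsWithin 0 (Set.Ioi 0)) (nhds muL))
    (hlam2L : 0 < lam2L)
    (hhv2 : Filter.Tendsto (fun r => (c2 r * mu r - lam2 r - r * mu r * b2) / r)
      (nhdsWithin 0 (Set.Ioi 0)) (nhds 0)) :
    Filter.Tendsto (fun r => ∑ ℓ ∈ Finset.range (ell r + 1), p2 r ℓ)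
      (nhdsWithin 0 (Set.Ioi 0)) (nhds 0) := by
  have hmem : Set.Ioc (0:ℝ) 1 ∈ 𝓝[>] (0:ℝ) := Ioc_mem_nhdsGT (by norm_num)
  have hsum_nonneg : ∀ p : ℝ → ℕ → ℝ, (∀ r ∈ Set.Ioc (0:ℝ) 1, ∀ ℓ ≤ ell r, 0 < p r ℓ) →
      ∀ r ∈ Set.Ioc (0:ℝ) 1, 0 ≤ ∑ ℓ ∈ range (ell r + 1), p r ℓ := fun p hp r hr =>
    sum_nonneg fun ℓ hℓ => (hp r hr ℓ (Nat.lt_succ_iff.mp (mem_range.mp hℓ))).le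
  have hgap : Tendsto (fun r => c2 r * mu r - lam2 r) (𝓝[>] 0) (𝓝 0) :=
    tendsto_zero_of_tendsto_sub_mul_div hhv2 hmulim
  have hserv : Tendsto (fun r => c2 r * mu r) (𝓝[>] 0) (𝓝 lam2L) := by
    simpa using hgap.add hlam2lim
  have hbound : Tendsto (fun r => (c2 r * mu r - lam2 r) / (c2 r * mu r)) (𝓝[>] 0) (𝓝 0) := by
    simpa [Pi.div_def] using hgap.div hserv hlam2L.ne'
  refine squeeze_zero' (eventually_of_mem hmem (hsum_nonneg p2 hp2pos)) ?_ hbound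
  filter_upwards [hmem] with r hr
  obtain ⟨-, hlam2, -, -, -, hell⟩ := hpos r hr
  exact sum_range_succ_le_sub_div_of_balance hlam2.le (hstable r hr) hell (hbal4 r hr)
    (hbal5 r hr) (hbal6 r hr) (hbal8 r hr) (hsum_nonneg p1 hp1pos r hr) (hnorm r hr)

theorem stmt16
    (lam1 lam2 c1 c2 mu : ℝ → ℝ) (ell : ℝ → ℕ) (p1 p2 p3 : ℝ → ℕ → ℝ)
    (lam1L lam2L c1L c2L muL b1 b2 ℓ₁ β1 β2 : ℝ)
    (hpos : ∀ r ∈ Set.Ioc (0:ℝ) 1,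
      0 < lam1 r ∧ 0 < lam2 r ∧ 0 < c1 r ∧ 0 < c2 r ∧ 0 < mu r ∧ 1 ≤ ell r)
    (hp1pos : ∀ r ∈ Set.Ioc (0:ℝ) 1, ∀ ℓ ≤ ell r, 0 < p1 r ℓ)
    (hp2pos : ∀ r ∈ Set.Ioc (0:ℝ) 1, ∀ ℓ ≤ ell r, 0 < p2 r ℓ)
    (hp3pos : ∀ r ∈ Set.Ioc (0:ℝ) 1, ∀ ℓ, ell r + 1 ≤ ℓ → 0 < p3 r ℓ)
    (hbal1 : ∀ r ∈ Set.Ioc (0:ℝ) 1, lam1 r * p1 r 0 = c1 r * mu r * p1 r 1)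
    (hbal2 : ∀ r ∈ Set.Ioc (0:ℝ) 1, ∀ ℓ, 1 ≤ ℓ → ℓ ≤ ell r - 1 →
      (lam1 r + c1 r * mu r) * p1 r ℓ
        = lam1 r * p1 r (ℓ - 1) + c1 r * mu r * p1 r (ℓ + 1) + lam2 r * p2 r (ℓ - 1))
    (hbal3 : ∀ r ∈ Set.Ioc (0:ℝ) 1,
      (lam1 r + c1 r * mu r) * p1 r (ell r)
        = lam1 r * p1 r (ell r - 1) + lam2 r * p2 r (ell r - 1))
    (hbal4 : ∀ r ∈ Set.Ioc (0:ℝ) 1, lam2 r * p2 r 0 = c1 r * mu r * p2 r 1)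
    (hbal5 : ∀ r ∈ Set.Ioc (0:ℝ) 1, ∀ ℓ, 1 ≤ ℓ → ℓ ≤ ell r - 1 →
      (lam2 r + c1 r * mu r) * p2 r ℓ = c1 r * mu r * p2 r (ℓ + 1))
    (hbal6 : ∀ r ∈ Set.Ioc (0:ℝ) 1,
      (lam2 r + c1 r * mu r) * p2 r (ell r) = c2 r * mu r * p3 r (ell r + 1))
    (hbal7 : ∀ r ∈ Set.Ioc (0:ℝ) 1,
      (lam2 r + c2 r * mu r) * p3 r (ell r + 1)
        = lam1 r * p1 r (ell r) + lam2 r * p2 r (ell r) + c2 r * mu r * p3 r (ell r + 2))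
    (hbal8 : ∀ r ∈ Set.Ioc (0:ℝ) 1, ∀ ℓ, ell r + 1 ≤ ℓ →
      lam2 r * p3 r ℓ = c2 r * mu r * p3 r (ℓ + 1))
    (hnorm : ∀ r ∈ Set.Ioc (0:ℝ) 1,
      (∑ ℓ ∈ Finset.range (ell r + 1), p1 r ℓ)
        + (∑ ℓ ∈ Finset.range (ell r + 1), p2 r ℓ)
        + (∑' n : ℕ, p3 r (ell r + 1 + n)) = 1)
    (hstable : ∀ r ∈ Set.Ioc (0:ℝ) 1, lam2 r < c2 r * mu r)
    (hlam1lim : Filter.Tendsto lam1 (nhdsWithin 0 (Set.Ioi 0)) (nhds lam1L))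
    (hlam2lim : Filter.Tendsto lam2 (nhdsWithin 0 (Set.Ioi 0)) (nhds lam2L))
    (hc1lim : Filter.Tendsto c1 (nhdsWithin 0 (Set.Ioi 0)) (nhds c1L))
    (hc2lim : Filter.Tendsto c2 (nhdsWithin 0 (Set.Ioi 0)) (nhds c2L))
    (hmulim : Filter.Tendsto mu (nhdsWithin 0 (Set.Ioi 0)) (nhds muL))
    (hlam1L : 0 < lam1L) (hlam2L : 0 < lam2L) (hc1L : 0 < c1L) (hc2L : 0 < c2L)
    (hmuL : 0 < muL)
    (hhv1 : Filter.Tendsto (fun r => (c1 r * mu r - lam1 r - r * mu r * b1) / r)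
      (nhdsWithin 0 (Set.Ioi 0)) (nhds 0))
    (hhv2 : Filter.Tendsto (fun r => (c2 r * mu r - lam2 r - r * mu r * b2) / r)
      (nhdsWithin 0 (Set.Ioi 0)) (nhds 0))
    (hb2 : 0 < b2)
    (helllim : Filter.Tendsto (fun r => (r * (ell r : ℝ) - ℓ₁) / r)
      (nhdsWithin 0 (Set.Ioi 0)) (nhds 0))
    (hℓ₁ : 0 < ℓ₁)
    (hβ1 : β1 = b1 / c1L) (hβ2 : β2 = b2 / c2L)
    (hb1 : b1 ≠ 0) :
    Filter.Tendsto (fun r => ∑ ℓ ∈ Finset.range (ell r + 1), p2 r ℓ)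
      (nhdsWithin 0 (Set.Ioi 0)) (nhds 0) :=
  stmt16_general lam1 lam2 c1 c2 mu ell p1 p2 p3 lam2L muL b2 hpos hp1pos hp2pos hbal4 hbal5 hbal6
    hbal8 hnorm hstable hlam2lim hmulim hlam2L hhv2
end
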